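/- arXiv:2210.01245 — 3 statements merged into one kernel-verified Lean document; each statement's English description precedes it below -/
import Mathlib

section
/- Let r > 0 and α ∈ [0,1]. Let P be a real h×m matrix, let d ∈ [0,r]^m, let W be a real m×n matrix with σ = ‖W‖, and let O be a semi-orthogonal real m×n matrix. Then ‖P·(α·diag(d)·W + (1−α)·O)‖ ≤ (1 + α(r·σ − 1))·‖P‖. -/
open Matrix

/-- A real `N × M` matrix is semi-orthogonal: `Aᵀ * A = 1` when `M < N`,
and `A * Aᵀ = 1` when `M ≥ N`. -/
def IsSemiOrthogonal {N M : ℕ} (A : Matrix (Fin N) (Fin M) ℝ) : Prop :=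
  if M < N then Aᵀ * A = 1 else A * Aᵀ = 1

/-- The operator norm of a real matrix induced by the Euclidean vector norms
(i.e. the largest singular value). -/
noncomputable def opNorm {m n : ℕ} (A : Matrix (Fin m) (Fin n) ℝ) : ℝ :=
  ‖LinearMap.toContinuousLinearMap (Matrix.toEuclideanLin A)‖

/-!
Write `Q = α • (diagonal d * W) + (1 - α) • O`. By the triangle inequality,
`‖Q‖ ≤ α ‖diagonal d‖ ‖W‖ + (1 - α) ‖O‖ ≤ α r σ + (1 - α)`, since the spectral norm of a diagonal
matrix is the largest absolute value of its entries and a semi-orthogonal matrix is a partial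
isometry, of norm at most one. Submultiplicativity then gives `‖P * Q‖ ≤ ‖P‖ ‖Q‖`.
-/

open scoped Matrix.Norms.L2Operator

namespace Matrix

variable {𝕜 : Type*} [RCLike 𝕜] {m n : Type*} [Fintype m] [Fintype n] [DecidableEq n]

lemma l2_opNorm_diagonal_le {v : n → 𝕜} {r : ℝ} (hr : 0 ≤ r)
    (hv : ∀ i, ‖v i‖ ≤ r) : ‖(diagonal v : Matrix n n 𝕜)‖ ≤ r := by
  rw [l2_opNorm_diagonal]
  exact (pi_norm_le_iff_of_nonneg hr).2 hv

lemma l2_opNorm_le_one_of_conjTranspose_mul_self_eq_one {A : Matrix m n 𝕜}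
    (hA : Aᴴ * A = 1) : ‖A‖ ≤ 1 := by
  have hsq : ‖A‖ * ‖A‖ ≤ 1 := by
    rw [← l2_opNorm_conjTranspose_mul_self, hA, ← diagonal_one]
    exact l2_opNorm_diagonal_le zero_le_one fun _ => norm_one.le
  nlinarith [norm_nonneg A]

lemma l2_opNorm_le_one_of_mul_conjTranspose_self_eq_one [DecidableEq m] {A : Matrix m n 𝕜}
    (hA : A * Aᴴ = 1) : ‖A‖ ≤ 1 := by
  rw [← l2_opNorm_conjTranspose]
  exact l2_opNorm_le_one_of_conjTranspose_mul_self_eq_one (by rwa [conjTranspose_conjTranspose])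

end Matrix

lemma opNorm_eq_l2_opNorm {m n : ℕ} (A : Matrix (Fin m) (Fin n) ℝ) : opNorm A = ‖A‖ := rfl

lemma IsSemiOrthogonal.l2_opNorm_le_one {N M : ℕ} {A : Matrix (Fin N) (Fin M) ℝ}
    (hA : IsSemiOrthogonal A) : ‖A‖ ≤ 1 := by
  rw [IsSemiOrthogonal] at hA
  split_ifs at hA
  · exact l2_opNorm_le_one_of_conjTranspose_mul_self_eq_one hA
  · exact l2_opNorm_le_one_of_mul_conjTranspose_self_eq_one hA

/-- Lemma 1 of the paper (single-step upper recursion):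
`‖P (α diag(d) W + (1-α) O)‖ ≤ (1 + α (r σ - 1)) ‖P‖`. -/
theorem single_step_upper_recursion
    (h m n : ℕ) (r α : ℝ) (hr : 0 < r) (hα0 : 0 ≤ α) (hα1 : α ≤ 1)
    (P : Matrix (Fin h) (Fin m) ℝ)
    (d : Fin m → ℝ) (hd : ∀ i, d i ∈ Set.Icc (0 : ℝ) r)
    (W : Matrix (Fin m) (Fin n) ℝ) (σ : ℝ) (hσ : σ = opNorm W)
    (O : Matrix (Fin m) (Fin n) ℝ) (hO : IsSemiOrthogonal O) :
    opNorm (P * (α • (Matrix.diagonal d * W) + (1 - α) • O)) ≤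
      (1 + α * (r * σ - 1)) * opNorm P := by
  rw [opNorm_eq_l2_opNorm] at hσ ⊢
  rw [opNorm_eq_l2_opNorm]
  have hD : ‖diagonal d‖ ≤ r := l2_opNorm_diagonal_le hr.le fun i => by
    rw [Real.norm_of_nonneg (hd i).1]
    exact (hd i).2
  have hDW : ‖diagonal d * W‖ ≤ r * σ := hσ ▸
    (l2_opNorm_mul _ _).trans (mul_le_mul_of_nonneg_right hD (norm_nonneg W))
  have hQ : ‖α • (diagonal d * W) + (1 - α) • O‖ ≤ 1 + α * (r * σ - 1) :=
    calc ‖α • (diagonal d * W) + (1 - α) • O‖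
        ≤ α * ‖diagonal d * W‖ + (1 - α) * ‖O‖ := by
          grw [norm_add_le, norm_smul_of_nonneg hα0, norm_smul_of_nonneg (sub_nonneg.2 hα1)]
      _ ≤ α * (r * σ) + (1 - α) * 1 := by
          gcongr
          exact hO.l2_opNorm_le_one
      _ = 1 + α * (r * σ - 1) := by ring
  calc ‖P * (α • (diagonal d * W) + (1 - α) • O)‖
      ≤ ‖P‖ * ‖α • (diagonal d * W) + (1 - α) • O‖ := l2_opNorm_mul _ _
    _ ≤ ‖P‖ * (1 + α * (r * σ - 1)) := by gcongr
    _ = (1 + α * (r * σ - 1)) * ‖P‖ := mul_comm _ _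
end

section
/- Let r > 0. Let P be a real h×m matrix, let d ∈ [0,r]^m, let W be a real m×n matrix with σ = ‖W‖, and let O be a semi-orthogonal real m×n matrix with m ≤ n. Suppose 0 < α < 1/(1 + r·σ). Then ‖P·(α·diag(d)·W + (1−α)·O)‖ ≥ (1 − α(1 + r·σ))·‖P‖. -/
open Matrix

/-!
Multiply `B = α diag(d) W + (1 - α) O` on the right by `Oᵀ`: since `O Oᵀ = 1`, this gives
`P B Oᵀ = (1 - α) P + α P diag(d) W Oᵀ`, and `‖Oᵀ‖ ≤ 1`, `‖diag(d) W Oᵀ‖ ≤ r σ`. Hence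
`(1 - α) ‖P‖ ≤ ‖P B‖ + α r σ ‖P‖`.
-/

open scoped Matrix.Norms.L2Operator

namespace Matrix

variable {𝕜 : Type*} [RCLike 𝕜] {l m n : Type*} [Fintype l] [Fintype m] [Fintype n]
  [DecidableEq m]

lemma l2_opNorm_conjTranspose_le_one {A : Matrix m n 𝕜} (hA : A * Aᴴ = 1) : ‖Aᴴ‖ ≤ 1 := by
  have hsq : ‖Aᴴ‖ * ‖Aᴴ‖ ≤ 1 := by
    rw [← l2_opNorm_conjTranspose_mul_self, conjTranspose_conjTranspose, hA, ← diagonal_one,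
      l2_opNorm_diagonal]
    exact pi_norm_le_iff_of_nonneg zero_le_one |>.2 fun _ => norm_one.le
  nlinarith [norm_nonneg Aᴴ]

lemma l2_opNorm_transpose_le_one {A : Matrix m n ℝ} (hA : A * Aᵀ = 1) : ‖Aᵀ‖ ≤ 1 := by
  rw [← conjTranspose_eq_transpose_of_trivial] at hA ⊢
  exact l2_opNorm_conjTranspose_le_one hA

lemma le_l2_opNorm_mul_of_mul_eq [DecidableEq n] {P : Matrix l m ℝ} {B : Matrix m n ℝ}
    {Q : Matrix n m ℝ} {E : Matrix m m ℝ} {α c : ℝ} (hα : 0 ≤ α) (hQ : ‖Q‖ ≤ 1) (hE : ‖E‖ ≤ c)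
    (hBQ : B * Q = α • E + (1 - α) • 1) :
    (1 - α * (1 + c)) * ‖P‖ ≤ ‖P * B‖ := by
  have hPBQ : (1 - α) • P = P * B * Q - α • (P * E) := by
    rw [Matrix.mul_assoc, hBQ, Matrix.mul_add, Matrix.mul_smul, Matrix.mul_smul, Matrix.mul_one,
      add_sub_cancel_left]
  have hPE : ‖P * E‖ ≤ ‖P‖ * c :=
    (l2_opNorm_mul P E).trans (mul_le_mul_of_nonneg_left hE (norm_nonneg P))
  have hPB : ‖P * B * Q‖ ≤ ‖P * B‖ :=
    (l2_opNorm_mul _ Q).trans (mul_le_of_le_one_right (norm_nonneg _) hQ)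
  calc (1 - α * (1 + c)) * ‖P‖ = (1 - α) * ‖P‖ - α * (‖P‖ * c) := by ring
    _ ≤ ‖(1 - α) • P‖ - α * ‖P * E‖ := by
        rw [norm_smul, Real.norm_eq_abs]
        gcongr
        exact le_abs_self _
    _ ≤ ‖P * B‖ := by
        rw [hPBQ]
        have := norm_sub_le (P * B * Q) (α • (P * E))
        rw [norm_smul, Real.norm_of_nonneg hα] at this
        linarith

end Matrix

lemma IsSemiOrthogonal.mul_transpose_eq_one {m n : ℕ} {O : Matrix (Fin m) (Fin n) ℝ}
    (hO : IsSemiOrthogonal O) (hmn : m ≤ n) : O * Oᵀ = 1 := by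
  rwa [IsSemiOrthogonal, if_neg hmn.not_gt] at hO

theorem single_step_lower_recursion_general
    (h m n : ℕ) (hmn : m ≤ n) (r α : ℝ) (hr : 0 < r)
    (P : Matrix (Fin h) (Fin m) ℝ)
    (d : Fin m → ℝ) (hd : ∀ i, d i ∈ Set.Icc (0 : ℝ) r)
    (W : Matrix (Fin m) (Fin n) ℝ) (σ : ℝ) (hσ : σ = opNorm W)
    (O : Matrix (Fin m) (Fin n) ℝ) (hO : IsSemiOrthogonal O)
    (hα0 : 0 < α) :
    (1 - α * (1 + r * σ)) * opNorm P ≤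
      opNorm (P * (α • (Matrix.diagonal d * W) + (1 - α) • O)) := by
  have hOO := hO.mul_transpose_eq_one hmn
  have hOt : ‖Oᵀ‖ ≤ 1 := l2_opNorm_transpose_le_one hOO
  have hD : ‖diagonal d‖ ≤ r := by
    rw [l2_opNorm_diagonal]
    exact pi_norm_le_iff_of_nonneg hr.le |>.2 fun i => by
      rw [Real.norm_of_nonneg (hd i).1]; exact (hd i).2
  have hE : ‖diagonal d * W * Oᵀ‖ ≤ r * σ := calc
    ‖diagonal d * W * Oᵀ‖ ≤ ‖diagonal d‖ * ‖W‖ * ‖Oᵀ‖ :=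
      (l2_opNorm_mul _ _).trans (by gcongr; exact l2_opNorm_mul _ _)
    _ ≤ r * ‖W‖ * 1 := by gcongr
    _ = r * σ := by rw [mul_one, hσ]; rfl
  refine le_l2_opNorm_mul_of_mul_eq hα0.le hOt hE ?_
  rw [Matrix.add_mul, Matrix.smul_mul, Matrix.smul_mul, hOO]

/-- Lemma 3 of the paper (single-step lower recursion): if `m ≤ n` and
`0 < α < 1/(1 + r σ)`, then
`‖P (α diag(d) W + (1-α) O)‖ ≥ (1 - α (1 + r σ)) ‖P‖`. -/
theorem single_step_lower_recursion
    (h m n : ℕ) (hmn : m ≤ n) (r α : ℝ) (hr : 0 < r)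
    (P : Matrix (Fin h) (Fin m) ℝ)
    (d : Fin m → ℝ) (hd : ∀ i, d i ∈ Set.Icc (0 : ℝ) r)
    (W : Matrix (Fin m) (Fin n) ℝ) (σ : ℝ) (hσ : σ = opNorm W)
    (O : Matrix (Fin m) (Fin n) ℝ) (hO : IsSemiOrthogonal O)
    (hα0 : 0 < α) (hα1 : α < 1 / (1 + r * σ)) :
    (1 - α * (1 + r * σ)) * opNorm P ≤
      opNorm (P * (α • (Matrix.diagonal d * W) + (1 - α) • O)) :=
  single_step_lower_recursion_general h m n hmn r α hr P d hd W σ hσ O hO hα0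
end

section
/- Let r > 0, let W be a real N×N matrix with σ = ‖W‖, let d ∈ [0,r]^N, let O be an orthogonal real N×N matrix, and let α > 0 satisfy α(1 + r·σ) < 1. Then the matrix M = α·diag(d)·W + (1−α)·O is invertible and ‖M⁻¹‖ ≤ 1/(1 − α(1 + r·σ)). -/
open Matrix
open scoped Matrix.Norms.L2Operator

lemma opNorm_eq_l2_norm {n : ℕ} (A : Matrix (Fin n) (Fin n) ℝ) : opNorm A = ‖A‖ := rfl

lemma l2_norm_diagonal_le {N : ℕ} {r : ℝ} (hr : 0 ≤ r) (d : Fin N → ℝ)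
    (hd : ∀ i, d i ∈ Set.Icc (0:ℝ) r) :
    ‖(diagonal d : Matrix (Fin N) (Fin N) ℝ)‖ ≤ r := by
  rw [Matrix.cstar_norm_def]
  refine ContinuousLinearMap.opNorm_le_bound _ hr fun x => ?_
  have happ : ∀ i, (Matrix.toEuclideanCLM (𝕜 := ℝ) (diagonal d) x) i = d i * x i := by
    intro i
    have h2 := congrFun (Matrix.ofLp_toEuclideanCLM (𝕜 := ℝ) (diagonal d) x) i
    simpa [Matrix.toLin'_apply, Matrix.mulVec_diagonal] using h2
  rw [EuclideanSpace.norm_eq, EuclideanSpace.norm_eq]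
  have hle : ∑ i, ‖(Matrix.toEuclideanCLM (𝕜 := ℝ) (diagonal d) x) i‖ ^ 2
      ≤ r ^ 2 * ∑ i, ‖x i‖ ^ 2 := by
    rw [Finset.mul_sum]
    refine Finset.sum_le_sum fun i _ => ?_
    rw [happ i]
    have h1 := (hd i).1; have h2 := (hd i).2
    rw [Real.norm_eq_abs, Real.norm_eq_abs, sq_abs, sq_abs, mul_pow]
    exact mul_le_mul_of_nonneg_right (by nlinarith) (sq_nonneg _)
  calc Real.sqrt (∑ i, ‖(Matrix.toEuclideanCLM (𝕜 := ℝ) (diagonal d) x) i‖ ^ 2)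
      ≤ Real.sqrt (r ^ 2 * ∑ i, ‖x i‖ ^ 2) := Real.sqrt_le_sqrt hle
    _ = r * Real.sqrt (∑ i, ‖x i‖ ^ 2) := by
        rw [Real.sqrt_mul (sq_nonneg r), Real.sqrt_sq hr]

/-- Lemma 7 of the paper: if `σ = ‖W‖`, `d ∈ [0,r]^N`, `O` is orthogonal and
`α (1 + r σ) < 1` with `α > 0`, then `M = α diag(d) W + (1-α) O` is invertible
and `‖M⁻¹‖ ≤ 1/(1 - α (1 + r σ))`. -/
theorem single_step_jacobian_inverse_bound
    (N : ℕ) (r : ℝ) (hr : 0 < r)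
    (W : Matrix (Fin N) (Fin N) ℝ) (σ : ℝ) (hσ : σ = opNorm W)
    (d : Fin N → ℝ) (hd : ∀ i, d i ∈ Set.Icc (0 : ℝ) r)
    (O : Matrix (Fin N) (Fin N) ℝ) (hO : Oᵀ * O = 1)
    (α : ℝ) (hα0 : 0 < α) (hα1 : α * (1 + r * σ) < 1)
    (M : Matrix (Fin N) (Fin N) ℝ)
    (hM : M = α • (Matrix.diagonal d * W) + (1 - α) • O) :
    IsUnit M ∧ opNorm M⁻¹ ≤ 1 / (1 - α * (1 + r * σ)) := by
  -- basic norm facts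
  have hσW : σ = ‖W‖ := by rw [hσ, opNorm_eq_l2_norm]
  have hσ0 : 0 ≤ σ := hσW ▸ norm_nonneg W
  have hα : α < 1 := by nlinarith [mul_nonneg (mul_nonneg hα0.le hr.le) hσ0]
  have h1α : (0:ℝ) < 1 - α := by linarith
  have hc : (0:ℝ) < 1 - α * (1 + r * σ) := by linarith
  -- orthogonality facts
  have hstar : star O = Oᵀ := by
    ext i j; simp [Matrix.star_eq_conjTranspose, Matrix.conjTranspose_apply]
  have h1 : star O * O = 1 := by rw [hstar]; exact hO
  have h2 : O * star O = 1 := by rw [hstar]; exact (mul_eq_one_comm).mp hO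
  have hone : ‖(1 : Matrix (Fin N) (Fin N) ℝ)‖ ≤ 1 := by
    rw [Matrix.cstar_norm_def, _root_.map_one]
    exact ContinuousLinearMap.norm_id_le
  have hOsq : ‖O‖ * ‖O‖ ≤ 1 := by
    rw [← CStarRing.norm_star_mul_self, h1]; exact hone
  have hOle : ‖O‖ ≤ 1 := by nlinarith [norm_nonneg O]
  have hOssq : ‖star O‖ * ‖star O‖ ≤ 1 := by
    rw [← CStarRing.norm_star_mul_self, star_star, h2]; exact hone
  have hOsle : ‖star O‖ ≤ 1 := by nlinarith [norm_nonneg (star O)]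
  -- the perturbation s
  set D : Matrix (Fin N) (Fin N) ℝ := Matrix.diagonal d * W with hD
  have hDnorm : ‖D‖ ≤ r * σ := by
    rw [hσW]
    calc ‖Matrix.diagonal d * W‖ ≤ ‖(Matrix.diagonal d : Matrix (Fin N) (Fin N) ℝ)‖ * ‖W‖ :=
          norm_mul_le _ _
      _ ≤ r * ‖W‖ :=
          mul_le_mul_of_nonneg_right (l2_norm_diagonal_le hr.le d hd) (norm_nonneg _)
  set s : Matrix (Fin N) (Fin N) ℝ := -((α / (1 - α)) • (D * star O)) with hsdef
  have hsnorm : ‖s‖ ≤ α / (1 - α) * (r * σ) := by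
    rw [hsdef, norm_neg, norm_smul, Real.norm_eq_abs,
      abs_of_pos (div_pos hα0 h1α)]
    refine mul_le_mul_of_nonneg_left ?_ (div_pos hα0 h1α).le
    calc ‖D * star O‖ ≤ ‖D‖ * ‖star O‖ := norm_mul_le _ _
      _ ≤ (r * σ) * 1 := by
          apply mul_le_mul hDnorm hOsle (norm_nonneg _) (by positivity)
      _ = r * σ := mul_one _
  have hslt : ‖s‖ < 1 := by
    refine lt_of_le_of_lt hsnorm ?_
    rw [div_mul_eq_mul_div, div_lt_one h1α]
    nlinarith
  -- the factorization M = ((1-α) • (1 - s)) * O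
  have hsO : s * O = -(((α / (1 - α)) : ℝ) • D) := by
    rw [hsdef, Matrix.neg_mul, Matrix.smul_mul, Matrix.mul_assoc, h1, Matrix.mul_one]
  have hfact : M = ((1 - α) • ((1 : Matrix (Fin N) (Fin N) ℝ) - s)) * O := by
    rw [Matrix.smul_mul, Matrix.sub_mul, Matrix.one_mul, hsO, sub_neg_eq_add, smul_add,
      smul_smul, mul_div_cancel₀ α (ne_of_gt h1α), hM, add_comm]
  -- Neumann series unit
  have u : (Matrix (Fin N) (Fin N) ℝ)ˣ := Units.oneSub s hslt
  set v : Matrix (Fin N) (Fin N) ℝ := ∑' n : ℕ, s ^ n with hv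
  have hmul1 : ((1 : Matrix (Fin N) (Fin N) ℝ) - s) * v = 1 := mul_neg_geom_series s hslt
  have hmul2 : v * ((1 : Matrix (Fin N) (Fin N) ℝ) - s) = 1 := geom_series_mul_neg s hslt
  have hvnorm : ‖v‖ ≤ (1 - ‖s‖)⁻¹ := by
    have := tsum_geometric_le_of_norm_lt_one s hslt
    linarith [hone]
  -- explicit inverse
  set Minv : Matrix (Fin N) (Fin N) ℝ := star O * ((1 - α)⁻¹ • v) with hMinv
  have hright : M * Minv = 1 := by
    rw [hfact, hMinv]
    simp only [Matrix.smul_mul, Matrix.mul_smul, smul_smul]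
    rw [inv_mul_cancel₀ (ne_of_gt h1α), one_smul, Matrix.mul_assoc,
      ← Matrix.mul_assoc O (star O), h2, Matrix.one_mul, hmul1]
  have hleft : Minv * M = 1 := by
    rw [hfact, hMinv]
    simp only [Matrix.smul_mul, Matrix.mul_smul, smul_smul]
    rw [mul_inv_cancel₀ (ne_of_gt h1α), one_smul, Matrix.mul_assoc,
      ← Matrix.mul_assoc v, hmul2, Matrix.one_mul, h1]
  have hunit : IsUnit M := ⟨⟨M, Minv, hright, hleft⟩, rfl⟩
  refine ⟨hunit, ?_⟩
  have hinv : M⁻¹ = Minv := Matrix.inv_eq_right_inv hright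
  rw [hinv, opNorm_eq_l2_norm, hMinv]
  have key : ‖star O * ((1 - α)⁻¹ • v)‖ ≤ (1 - α)⁻¹ * (1 - ‖s‖)⁻¹ :=
    calc ‖star O * ((1 - α)⁻¹ • v)‖ ≤ ‖star O‖ * ‖(1 - α)⁻¹ • v‖ := norm_mul_le _ _
      _ ≤ 1 * ((1 - α)⁻¹ * (1 - ‖s‖)⁻¹) := by
          rw [norm_smul, Real.norm_eq_abs, abs_of_pos (inv_pos.mpr h1α)]
          refine mul_le_mul hOsle ?_ (by positivity) zero_le_one
          exact mul_le_mul_of_nonneg_left hvnorm (inv_pos.mpr h1α).le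
      _ = (1 - α)⁻¹ * (1 - ‖s‖)⁻¹ := one_mul _
  refine key.trans ?_
  rw [one_div]
  -- (1-α)⁻¹ * (1-‖s‖)⁻¹ ≤ (1 - α(1+rσ))⁻¹
  have hs0 : (0:ℝ) < 1 - ‖s‖ := by linarith
  rw [← mul_inv]
  refine inv_anti₀ hc ?_
  have : (1 - α) * ‖s‖ ≤ α * (r * σ) := by
    have := mul_le_mul_of_nonneg_left hsnorm h1α.le
    calc (1 - α) * ‖s‖ ≤ (1 - α) * (α / (1 - α) * (r * σ)) := this
      _ = α * (r * σ) := by field_simp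
  nlinarith
end
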